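/- The n×n tridiagonal matrix T₂ with diagonal entries (2, 2, ..., 2, √2), off-diagonal entries +1 except the last off-diagonal entry 1/√2, is symmetric positive semi-definite. -/

import Mathlib

/-!
Completing squares along the path gives
`xᵀ T₂ x = x₁² + ∑_{k=1}^{n-2} (x_k + x_{k+1})² + (x_{n-1} + x_n/√2)² + (√2 - 1/2) x_n²`,
and `√2 - 1/2 > 0`. In matrix form `T₂ = Bᵀ B` for the lower bidiagonal `(n+1) × n` matrix `B`
whose rows are the linear forms being squared.
-/

open Matrix

/-- The tridiagonal matrix `T₂` with diagonal `(2, …, 2, √2)`, off-diagonal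
entries `+1` except the last off-diagonal entry `1/√2`. -/
noncomputable def T2 (n : ℕ) : Matrix (Fin n) (Fin n) ℝ :=
  Matrix.of fun i j =>
    if i = j then (if (i : ℕ) = n - 1 then Real.sqrt 2 else 2)
    else if (i : ℕ) + 1 = (j : ℕ) ∨ (j : ℕ) + 1 = (i : ℕ) then
      (if (i : ℕ) = n - 1 ∨ (j : ℕ) = n - 1 then 1 / Real.sqrt 2 else 1)
    else 0

/-- Column `j` carries `d j` in row `j` and `e j` in row `j + 1`. -/
def bidiagonal {R : Type*} [AddZeroClass R] {n : ℕ} (d e : Fin n → R) :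
    Matrix (Fin (n + 1)) (Fin n) R :=
  of fun k j => (if k = j.castSucc then d j else 0) + (if k = j.succ then e j else 0)

theorem bidiagonal_transpose_mul_self_apply {R : Type*} [CommSemiring R] {n : ℕ}
    (d e : Fin n → R) (i j : Fin n) :
    ((bidiagonal d e)ᵀ * bidiagonal d e) i j =
      (if i = j then d i * d i + e i * e i else 0) +
      (if (i : ℕ) = j + 1 then d i * e j else 0) +
      (if (j : ℕ) = i + 1 then e i * d j else 0) := by
  simp only [mul_apply, transpose_apply, bidiagonal, of_apply, add_mul, ite_mul, zero_mul,
    Finset.sum_add_distrib, Finset.sum_ite_eq', Finset.mem_univ, if_true]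
  obtain rfl | hij := eq_or_ne i j
  · simp [Fin.ext_iff]
  · simp only [Fin.ext_iff, Fin.val_castSucc, Fin.val_succ] at hij ⊢
    split_ifs <;> first | omega | ring

noncomputable def T2Factor (n : ℕ) : Matrix (Fin (n + 1)) (Fin n) ℝ :=
  bidiagonal (fun i => if (i : ℕ) = n - 1 then √2 / 2 else 1)
    (fun i => if (i : ℕ) = n - 1 then √(√2 - 1 / 2) else 1)

theorem T2_eq_transpose_mul_self (n : ℕ) : T2 n = (T2Factor n)ᵀ * T2Factor n := by
  have sqrt2_sq : √2 * √2 = 2 := Real.mul_self_sqrt zero_le_two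
  have sqrt_sq : √(√2 - 1 / 2) * √(√2 - 1 / 2) = √2 - 1 / 2 :=
    Real.mul_self_sqrt (by nlinarith [Real.sqrt_nonneg 2])
  have hinv : 1 / √2 = √2 / 2 := by field_simp; simp
  ext i j
  rw [T2Factor, bidiagonal_transpose_mul_self_apply]
  simp only [T2, of_apply, Fin.ext_iff, hinv]
  split_ifs <;> first | omega | linarith

/-- `T₂` is symmetric positive semi-definite. -/
theorem stmt_6 (n : ℕ) : (T2 n).PosSemidef := by
  rw [T2_eq_transpose_mul_self, ← conjTranspose_eq_transpose_of_trivial]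
  exact posSemidef_conjTranspose_mul_self _
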